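/- For every pair of functions a, b : {-1,1}² → [-1,1] and every function c : {-1,1} → [-1,1], the sum over all (x₁,x₂,x₃) ∈ {-1,1}³ of Q_S(x₁,x₂,x₃) · a(x₁,x₂) · b(x₁,x₂) · c(x₃) is at most 4, where Q_S(x₁,x₂,x₃) = 1 - (1-x₁)(1-x₂)(1-x₃)/4 - (1+x₁)(1+x₂)(1+x₃)/4. Moreover the bound 4 is attained. -/

import Mathlib

/-! Q_S equals -1 when x₁ = x₂ = x₃ and +1 otherwise. Summing out x₃, the Svetlichny sum becomes
(p₋₋ - p₊₊)(c₊ - c₋) + (p₋₊ + p₊₋)(c₊ + c₋) with p = ab ∈ [-1, 1], which is at most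
2|c₊ - c₋| + 2|c₊ + c₋| = 4 max(|c₊|, |c₋|) ≤ 4; the choice a = b = c = 1 attains 4. -/

noncomputable def QS (x₁ x₂ x₃ : ℝ) : ℝ :=
  1 - (1 - x₁) * (1 - x₂) * (1 - x₃) / 4 - (1 + x₁) * (1 + x₂) * (1 + x₃) / 4

section Abs

variable {α : Type*} [Field α] [LinearOrder α] [IsStrictOrderedRing α]

lemma abs_mul_le_one_of_abs_le_one {p q : α} (hp : |p| ≤ 1) (hq : |q| ≤ 1) : |p * q| ≤ 1 := by
  rw [abs_mul]
  exact mul_le_one₀ hp (abs_nonneg q) hq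

lemma mul_le_abs_of_abs_le_one {p u : α} (hp : |p| ≤ 1) : p * u ≤ |u| :=
  calc p * u ≤ |p * u| := le_abs_self _
    _ = |p| * |u| := abs_mul p u
    _ ≤ |u| := mul_le_of_le_one_left (abs_nonneg u) hp

lemma abs_sub_add_abs_add_le {s t r : α} (hs : |s| ≤ r) (ht : |t| ≤ r) :
    |s - t| + |s + t| ≤ 2 * r := by
  rw [abs_le] at hs ht
  rcases abs_cases (s - t) with ⟨h₁, -⟩ | ⟨h₁, -⟩ <;>
    rcases abs_cases (s + t) with ⟨h₂, -⟩ | ⟨h₂, -⟩ <;> linarith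

end Abs

lemma sum_QS_mul_eq (a b : ℝ → ℝ → ℝ) (c : ℝ → ℝ) :
    ∑ x₁ ∈ ({-1, 1} : Finset ℝ), ∑ x₂ ∈ ({-1, 1} : Finset ℝ), ∑ x₃ ∈ ({-1, 1} : Finset ℝ),
        QS x₁ x₂ x₃ * a x₁ x₂ * b x₁ x₂ * c x₃ =
      (a (-1) (-1) * b (-1) (-1) - a 1 1 * b 1 1) * (c 1 - c (-1)) +
        (a (-1) 1 * b (-1) 1 + a 1 (-1) * b 1 (-1)) * (c 1 + c (-1)) := by
  simp only [Finset.sum_pair (show (-1 : ℝ) ≠ 1 by norm_num), QS]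
  ring

lemma sum_QS_mul_le_four (a b : ℝ → ℝ → ℝ) (c : ℝ → ℝ)
    (ha : ∀ u ∈ ({-1, 1} : Finset ℝ), ∀ v ∈ ({-1, 1} : Finset ℝ), |a u v| ≤ 1)
    (hb : ∀ u ∈ ({-1, 1} : Finset ℝ), ∀ v ∈ ({-1, 1} : Finset ℝ), |b u v| ≤ 1)
    (hc : ∀ u ∈ ({-1, 1} : Finset ℝ), |c u| ≤ 1) :
    ∑ x₁ ∈ ({-1, 1} : Finset ℝ), ∑ x₂ ∈ ({-1, 1} : Finset ℝ), ∑ x₃ ∈ ({-1, 1} : Finset ℝ),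
        QS x₁ x₂ x₃ * a x₁ x₂ * b x₁ x₂ * c x₃ ≤ 4 := by
  have hp : ∀ u ∈ ({-1, 1} : Finset ℝ), ∀ v ∈ ({-1, 1} : Finset ℝ), |a u v * b u v| ≤ 1 :=
    fun u hu v hv => abs_mul_le_one_of_abs_le_one (ha u hu v hv) (hb u hu v hv)
  have hm : (-1 : ℝ) ∈ ({-1, 1} : Finset ℝ) := by simp
  have h1 : (1 : ℝ) ∈ ({-1, 1} : Finset ℝ) := by simp
  rw [sum_QS_mul_eq]
  linarith [abs_sub_add_abs_add_le (hc 1 h1) (hc (-1) hm),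
    mul_le_abs_of_abs_le_one (u := c 1 - c (-1)) (hp _ hm _ hm),
    mul_le_abs_of_abs_le_one (u := c 1 - c (-1)) (p := -(a 1 1 * b 1 1))
      (by rw [abs_neg]; exact hp _ h1 _ h1),
    mul_le_abs_of_abs_le_one (u := c 1 + c (-1)) (hp _ hm _ h1),
    mul_le_abs_of_abs_le_one (u := c 1 + c (-1)) (hp _ h1 _ hm)]

theorem stmt_3 :
    (∀ a b : ℝ → ℝ → ℝ, ∀ c : ℝ → ℝ,
      (∀ u ∈ ({-1, 1} : Finset ℝ), ∀ v ∈ ({-1, 1} : Finset ℝ), |a u v| ≤ 1) →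
      (∀ u ∈ ({-1, 1} : Finset ℝ), ∀ v ∈ ({-1, 1} : Finset ℝ), |b u v| ≤ 1) →
      (∀ u ∈ ({-1, 1} : Finset ℝ), |c u| ≤ 1) →
      ∑ x₁ ∈ ({-1, 1} : Finset ℝ), ∑ x₂ ∈ ({-1, 1} : Finset ℝ), ∑ x₃ ∈ ({-1, 1} : Finset ℝ),
        QS x₁ x₂ x₃ * a x₁ x₂ * b x₁ x₂ * c x₃ ≤ 4) ∧
    (∃ a b : ℝ → ℝ → ℝ, ∃ c : ℝ → ℝ,
      (∀ u ∈ ({-1, 1} : Finset ℝ), ∀ v ∈ ({-1, 1} : Finset ℝ), |a u v| ≤ 1) ∧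
      (∀ u ∈ ({-1, 1} : Finset ℝ), ∀ v ∈ ({-1, 1} : Finset ℝ), |b u v| ≤ 1) ∧
      (∀ u ∈ ({-1, 1} : Finset ℝ), |c u| ≤ 1) ∧
      ∑ x₁ ∈ ({-1, 1} : Finset ℝ), ∑ x₂ ∈ ({-1, 1} : Finset ℝ), ∑ x₃ ∈ ({-1, 1} : Finset ℝ),
        QS x₁ x₂ x₃ * a x₁ x₂ * b x₁ x₂ * c x₃ = 4) := by
  refine ⟨sum_QS_mul_le_four, fun _ _ => 1, fun _ _ => 1, fun _ => 1, ?_, ?_, ?_, ?_⟩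
  · simp
  · simp
  · simp
  · rw [sum_QS_mul_eq]
    norm_num
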